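/- arXiv:math/0210433 — 4 statements merged into one kernel-verified Lean document; each statement's English description precedes it below -/
import Mathlib

section
/- Let X be a complete metric space and h : X → (0,∞) a function which is locally bounded away from zero (every point of X has a neighborhood on which the infimum of h is positive). Call a point x ∈ X a half-minimum of h if h(y) ≥ (1/2)·h(x) for every y with d(x,y) ≤ (1/2)·√(h(x)). Then for every point x ∈ X with h(x) < 1/2 there exists a point x' with d(x,x') ≤ 2, h(x') ≤ h(x), and x' a half-minimum of h. -/
/-- **Half-minimum lemma.** In a complete metric space, if `h` is a positive function
which is locally bounded away from zero, then near any point where `h < 1/2` there is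
a half-minimum of `h`. -/
theorem half_minimum_lemma
    {X : Type*} [MetricSpace X] [CompleteSpace X]
    (h : X → ℝ) (hpos : ∀ x, 0 < h x)
    (hloc : ∀ x : X, ∃ ε > (0 : ℝ), ∃ U ∈ nhds x, ∀ y ∈ U, ε ≤ h y)
    (x : X) (hx : h x < 1 / 2) :
    ∃ x' : X, dist x x' ≤ 2 ∧ h x' ≤ h x ∧
      ∀ y : X, dist x' y ≤ (1 / 2) * Real.sqrt (h x') → (1 / 2) * h x' ≤ h y := by
  by_contra hcon
  push_neg at hcon
  set r : ℝ := Real.sqrt 2⁻¹ with hr_def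
  have hr0 : 0 < r := Real.sqrt_pos.2 (by norm_num)
  have hrsq : r ^ 2 = 2⁻¹ := Real.sq_sqrt (by norm_num)
  have hsqrtpow : ∀ k : ℕ, Real.sqrt ((2⁻¹:ℝ) ^ k) = r ^ k := by
    intro k
    have h2 : ((r:ℝ) ^ k) ^ 2 = (2⁻¹:ℝ) ^ k := by
      rw [← pow_mul, mul_comm, pow_mul, hrsq]
    rw [← h2, Real.sqrt_sq (pow_nonneg hr0.le _)]
  have hr45 : r ≤ 4 / 5 := by nlinarith [sq_nonneg (r - 4/5)]
  have hr1 : r < 1 := lt_of_le_of_lt hr45 (by norm_num)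
  -- choice of a "better" point
  have hex : ∀ z : X, ∃ y : X, dist x z ≤ 2 → h z ≤ h x →
      dist z y ≤ (1/2) * Real.sqrt (h z) ∧ h y < (1/2) * h z := by
    intro z
    by_cases H1 : dist x z ≤ 2
    · by_cases H2 : h z ≤ h x
      · obtain ⟨y, hy1, hy2⟩ := hcon z H1 H2
        exact ⟨y, fun _ _ => ⟨hy1, hy2⟩⟩
      · exact ⟨z, fun _ H => absurd H H2⟩
    · exact ⟨z, fun H _ => absurd H H1⟩
  choose next hnext using hex
  set u : ℕ → X := fun n => next^[n] x with hu_def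
  have hu0 : u 0 = x := rfl
  have husucc : ∀ n, u (n + 1) = next (u n) := fun n =>
    Function.iterate_succ_apply' next n x
  -- invariant
  have inv : ∀ n : ℕ, dist x (u n) ≤ 2 - 2 * r ^ n ∧ h (u n) ≤ h x * (2⁻¹) ^ n := by
    intro n
    induction n with
    | zero => simp [hu0]
    | succ n ih =>
      have hrn : (0:ℝ) < r ^ n := pow_pos hr0 n
      have hd2 : dist x (u n) ≤ 2 := le_trans ih.1 (by nlinarith)
      have hhz : h (u n) ≤ h x := le_trans ih.2 (by
        have : (2⁻¹:ℝ) ^ n ≤ 1 := pow_le_one₀ (by norm_num) (by norm_num)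
        nlinarith [hpos x])
      obtain ⟨hstep1, hstep2⟩ := hnext (u n) hd2 hhz
      -- bound the step
      have hsq : Real.sqrt (h (u n)) ≤ r ^ (n + 1) := by
        have h1 : h (u n) ≤ (2⁻¹:ℝ) ^ (n + 1) := by
          have : h x * (2⁻¹:ℝ) ^ n ≤ (2⁻¹:ℝ) ^ (n+1) := by
            have h2n : (0:ℝ) < (2⁻¹:ℝ) ^ n := by positivity
            rw [pow_succ]
            nlinarith
          linarith [ih.2]
        calc Real.sqrt (h (u n)) ≤ Real.sqrt ((2⁻¹:ℝ) ^ (n+1)) :=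
              Real.sqrt_le_sqrt h1
          _ = r ^ (n + 1) := hsqrtpow (n+1)
      have hstep1' : dist (u n) (u (n+1)) ≤ (1/2) * r ^ (n+1) := by
        rw [husucc]
        calc dist (u n) (next (u n)) ≤ (1/2) * Real.sqrt (h (u n)) := hstep1
          _ ≤ (1/2) * r ^ (n+1) := by linarith
      constructor
      · have := dist_triangle x (u n) (u (n+1))
        have hpow : r ^ (n+1) = r * r ^ n := by rw [pow_succ]; ring
        nlinarith [ih.1]
      · rw [husucc]
        have := hstep2
        rw [pow_succ]
        nlinarith [ih.2, hpos (next (u n))]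
  -- Cauchy
  have hdist : ∀ n, dist (u n) (u (n+1)) ≤ (r/2) * r ^ n := by
    intro n
    have hrn : (0:ℝ) < r ^ n := pow_pos hr0 n
    have hd2 : dist x (u n) ≤ 2 := le_trans (inv n).1 (by nlinarith)
    have hhz : h (u n) ≤ h x := le_trans (inv n).2 (by
      have : (2⁻¹:ℝ) ^ n ≤ 1 := pow_le_one₀ (by norm_num) (by norm_num)
      nlinarith [hpos x])
    obtain ⟨hstep1, _⟩ := hnext (u n) hd2 hhz
    have hsq : Real.sqrt (h (u n)) ≤ r ^ (n + 1) := by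
      have h1 : h (u n) ≤ (2⁻¹:ℝ) ^ (n + 1) := by
        have : h x * (2⁻¹:ℝ) ^ n ≤ (2⁻¹:ℝ) ^ (n+1) := by
          have h2n : (0:ℝ) < (2⁻¹:ℝ) ^ n := by positivity
          rw [pow_succ]
          nlinarith
        linarith [(inv n).2]
      calc Real.sqrt (h (u n)) ≤ Real.sqrt ((2⁻¹:ℝ) ^ (n+1)) := Real.sqrt_le_sqrt h1
        _ = r ^ (n + 1) := hsqrtpow (n+1)
    rw [husucc]
    calc dist (u n) (next (u n)) ≤ (1/2) * Real.sqrt (h (u n)) := hstep1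
      _ ≤ (1/2) * r ^ (n+1) := by linarith
      _ = (r/2) * r ^ n := by rw [pow_succ]; ring
  have hcau : CauchySeq u := cauchySeq_of_le_geometric r (r/2) hr1 hdist
  obtain ⟨x', hx'⟩ := cauchySeq_tendsto_of_complete hcau
  obtain ⟨ε, hε, U, hU, hUh⟩ := hloc x'
  have h1 : ∀ᶠ n in Filter.atTop, u n ∈ U := hx'.eventually_mem hU
  have h2 : ∀ᶠ n in Filter.atTop, h x * (2⁻¹:ℝ) ^ n < ε := by
    have ht : Filter.Tendsto (fun n : ℕ => h x * (2⁻¹:ℝ) ^ n) Filter.atTop (nhds 0) := by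
      simpa using
        (tendsto_pow_atTop_nhds_zero_of_lt_one (by norm_num : (0:ℝ) ≤ 2⁻¹)
          (by norm_num : (2⁻¹:ℝ) < 1)).const_mul (h x)
    exact ht.eventually (gt_mem_nhds hε)
  obtain ⟨n, hn1, hn2⟩ := (h1.and h2).exists
  have := hUh (u n) hn1
  have := (inv n).2
  linarith
end

section
/- Let Y be a metric space, λ ≥ 1, C ≥ 0, and f̄ : Y → E² a (λ,C)-quasi-isometry. Then there exists a constant δ, depending only on λ and C, such that for every continuous map D₂ : D² → Y there is a continuous map D₁ : D² → E² satisfying d(f̄(D₂(u)), D₁(u)) ≤ δ for all u ∈ D². -/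
/-- Given a `(λ,C)`-quasi-isometry `f : Y → E²`, there is a constant `δ` depending only
on `λ` and `C` such that every continuous map `D₂` from the closed unit disc to `Y` can be
shadowed, after composing with `f`, by a continuous map `D₁` into `E²` at distance `≤ δ`. -/
theorem quasiisometry_disc_approximation :
    ∀ lam C : ℝ, 1 ≤ lam → 0 ≤ C →
      ∃ δ : ℝ, ∀ (Y : Type) [MetricSpace Y],
        ∀ f : Y → EuclideanSpace ℝ (Fin 2),
          (∀ y y' : Y, lam⁻¹ * dist y y' - C ≤ dist (f y) (f y') ∧
              dist (f y) (f y') ≤ lam * dist y y' + C) →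
          (∀ z : EuclideanSpace ℝ (Fin 2), ∃ y : Y, dist (f y) z ≤ C) →
          ∀ D₂ : Metric.closedBall (0 : EuclideanSpace ℝ (Fin 2)) 1 → Y,
            Continuous D₂ →
            ∃ D₁ : Metric.closedBall (0 : EuclideanSpace ℝ (Fin 2)) 1 →
                EuclideanSpace ℝ (Fin 2),
              Continuous D₁ ∧ ∀ u, dist (f (D₂ u)) (D₁ u) ≤ δ := by
  intro lam C hlam hC
  refine ⟨lam + C, ?_⟩
  intro Y _ f hf _hsurj D₂ hD₂
  haveI : CompactSpace (Metric.closedBall (0 : EuclideanSpace ℝ (Fin 2)) 1) :=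
    isCompact_iff_compactSpace.mp (isCompact_closedBall _ _)
  set g : Metric.closedBall (0 : EuclideanSpace ℝ (Fin 2)) 1 → EuclideanSpace ℝ (Fin 2) :=
    fun u => f (D₂ u) with hg
  -- uniform continuity of D₂
  have huc : UniformContinuous D₂ := CompactSpace.uniformContinuous_of_continuous hD₂
  obtain ⟨ε, hε, hmod⟩ := Metric.uniformContinuous_iff.mp huc 1 one_pos
  -- finite ε-net
  obtain ⟨t, -, htf, hcover⟩ :=
    (isCompact_univ : IsCompact (Set.univ : Set (Metric.closedBall (0 : EuclideanSpace ℝ (Fin 2)) 1))).finite_cover_balls (e := ε) hε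
  set T : Finset (Metric.closedBall (0 : EuclideanSpace ℝ (Fin 2)) 1) := htf.toFinset with hT
  -- bump functions
  set φ : Metric.closedBall (0 : EuclideanSpace ℝ (Fin 2)) 1 → Metric.closedBall (0 : EuclideanSpace ℝ (Fin 2)) 1 → ℝ := fun i u => max (ε - dist u i) 0 with hφ
  have hφ0 : ∀ i u, 0 ≤ φ i u := fun i u => le_max_right _ _
  set S : Metric.closedBall (0 : EuclideanSpace ℝ (Fin 2)) 1 → ℝ := fun u => ∑ i ∈ T, φ i u with hS
  have hSpos : ∀ u, 0 < S u := by
    intro u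
    have hu : u ∈ ⋃ x ∈ t, Metric.ball x ε := hcover (Set.mem_univ u)
    obtain ⟨i, hit, hui⟩ := Set.mem_iUnion₂.mp hu
    refine Finset.sum_pos' (fun i _ => hφ0 i u) ⟨i, htf.mem_toFinset.mpr hit, ?_⟩
    simp only [hφ]
    have : 0 < ε - dist u i := by
      rw [Metric.mem_ball] at hui; linarith
    exact lt_max_of_lt_left this
  have hφcont : ∀ i : Metric.closedBall (0 : EuclideanSpace ℝ (Fin 2)) 1, Continuous (φ i) := by
    intro i
    exact (continuous_const.sub (continuous_id.dist continuous_const)).max continuous_const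
  have hScont : Continuous S := continuous_finset_sum _ fun i _ => hφcont i
  refine ⟨fun u => (S u)⁻¹ • ∑ i ∈ T, φ i u • g i, ?_, ?_⟩
  · exact (hScont.inv₀ fun u => (hSpos u).ne').smul
      (continuous_finset_sum _ fun i _ => (hφcont i).smul continuous_const)
  · intro u
    show dist (g u) ((S u)⁻¹ • ∑ i ∈ T, φ i u • g i) ≤ lam + C
    have hSne : S u ≠ 0 := (hSpos u).ne'
    have key : g u - (S u)⁻¹ • ∑ i ∈ T, φ i u • g i
        = (S u)⁻¹ • ∑ i ∈ T, φ i u • (g u - g i) := by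
      have h1 : g u = (S u)⁻¹ • (S u • g u) := by
        rw [smul_smul, inv_mul_cancel₀ hSne, one_smul]
      calc g u - (S u)⁻¹ • ∑ i ∈ T, φ i u • g i
          = (S u)⁻¹ • (S u • g u - ∑ i ∈ T, φ i u • g i) := by
            rw [smul_sub, ← h1]
        _ = (S u)⁻¹ • ∑ i ∈ T, φ i u • (g u - g i) := by
            congr 1
            rw [hS, Finset.sum_smul, ← Finset.sum_sub_distrib]
            exact Finset.sum_congr rfl fun i _ => by rw [smul_sub]
    rw [dist_eq_norm, key, norm_smul]
    have hterm : ∀ i ∈ T, ‖φ i u • (g u - g i)‖ ≤ φ i u * (lam + C) := by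
      intro i _
      rw [norm_smul, Real.norm_eq_abs, abs_of_nonneg (hφ0 i u)]
      by_cases h : dist u i < ε
      · have hd : dist (D₂ u) (D₂ i) < 1 := hmod h
        have hgb : ‖g u - g i‖ ≤ lam + C := by
          rw [← dist_eq_norm]
          have h2 := (hf (D₂ u) (D₂ i)).2
          nlinarith [dist_nonneg (x := D₂ u) (y := D₂ i)]
        exact mul_le_mul_of_nonneg_left hgb (hφ0 i u)
      · have : φ i u = 0 := by
          simp only [hφ]
          exact max_eq_right (by push_neg at h; linarith)
        simp [this]
    have hsum : ‖∑ i ∈ T, φ i u • (g u - g i)‖ ≤ S u * (lam + C) := by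
      calc ‖∑ i ∈ T, φ i u • (g u - g i)‖ ≤ ∑ i ∈ T, ‖φ i u • (g u - g i)‖ :=
            norm_sum_le _ _
        _ ≤ ∑ i ∈ T, φ i u * (lam + C) := Finset.sum_le_sum hterm
        _ = S u * (lam + C) := by rw [hS, Finset.sum_mul]
    calc ‖(S u)⁻¹‖ * ‖∑ i ∈ T, φ i u • (g u - g i)‖
        ≤ (S u)⁻¹ * (S u * (lam + C)) := by
          rw [Real.norm_eq_abs, abs_of_pos (inv_pos.mpr (hSpos u))]
          exact mul_le_mul_of_nonneg_left hsum (inv_nonneg.mpr (hSpos u).le)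
      _ = lam + C := by field_simp
end

section
/- Let Y be a geodesic metric space and let λ, C ≥ 0. Suppose f : E² → Y satisfies d(f(x), f(x')) ≤ λ·d(x,x') + C for all x, x' ∈ E². Then there exists a constant δ, depending only on λ and C, such that for every continuous map c₁ : S¹ → E² there is a continuous map c₂ : S¹ → Y with d(f(c₁(t)), c₂(t)) ≤ δ for all t ∈ S¹. -/
open Real Topology

def IsGeodesicSpace (Y : Type*) [MetricSpace Y] : Prop :=
  ∀ x y : Y, ∃ γ : ℝ → Y, γ 0 = x ∧ γ (dist x y) = y ∧
    ∀ s ∈ Set.Icc (0 : ℝ) (dist x y), ∀ t ∈ Set.Icc (0 : ℝ) (dist x y),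
      dist (γ s) (γ t) = |s - t|

namespace LoopApprox

noncomputable def P2 (θ : ℝ) : EuclideanSpace ℝ (Fin 2) := !₂[Real.cos (2*π*θ), Real.sin (2*π*θ)]

lemma P2_mem (θ : ℝ) : P2 θ ∈ Metric.sphere (0 : EuclideanSpace ℝ (Fin 2)) 1 := by
  rw [mem_sphere_zero_iff_norm, EuclideanSpace.norm_eq]
  simp [P2, Fin.sum_univ_two, Real.sin_sq_add_cos_sq, Real.cos_sq_add_sin_sq]

lemma P2_add_int (θ : ℝ) (k : ℤ) : P2 (θ + k) = P2 θ := by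
  unfold P2
  have hc : 2*π*(θ + k) = 2*π*θ + k * (2*π) := by ring
  rw [hc, Real.cos_add_int_mul_two_pi, Real.sin_add_int_mul_two_pi]

lemma sqrt_sq_add_sq_le (a b : ℝ) : Real.sqrt (a^2 + b^2) ≤ |a| + |b| := by
  rw [show a^2 + b^2 = |a|^2 + |b|^2 by simp [sq_abs]]
  calc Real.sqrt (|a|^2 + |b|^2) ≤ Real.sqrt ((|a|+|b|)^2) := by
        apply Real.sqrt_le_sqrt; nlinarith [abs_nonneg a, abs_nonneg b]
    _ = |a| + |b| := Real.sqrt_sq (by positivity)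

lemma cos_lip (a b : ℝ) : |Real.cos a - Real.cos b| ≤ |a - b| := by
  rw [Real.cos_sub_cos, abs_mul, abs_mul]
  have h1 : |Real.sin ((a+b)/2)| ≤ 1 := Real.abs_sin_le_one _
  have h2 : |Real.sin ((a-b)/2)| ≤ |(a-b)/2| := Real.abs_sin_le_abs
  have h3 : |(a-b)/2| = |a-b|/2 := by rw [abs_div]; norm_num
  have h4 : |(-2 : ℝ)| = 2 := by norm_num
  rw [h3] at h2; rw [h4]
  nlinarith [abs_nonneg (Real.sin ((a+b)/2)), abs_nonneg (Real.sin ((a-b)/2)), abs_nonneg (a-b)]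

lemma sin_lip (a b : ℝ) : |Real.sin a - Real.sin b| ≤ |a - b| := by
  rw [Real.sin_sub_sin, abs_mul, abs_mul]
  have h1 : |Real.cos ((a+b)/2)| ≤ 1 := Real.abs_cos_le_one _
  have h2 : |Real.sin ((a-b)/2)| ≤ |(a-b)/2| := Real.abs_sin_le_abs
  have h3 : |(a-b)/2| = |a-b|/2 := by rw [abs_div]; norm_num
  have h4 : |(2 : ℝ)| = 2 := by norm_num
  rw [h3] at h2; rw [h4]
  nlinarith [abs_nonneg (Real.cos ((a+b)/2)), abs_nonneg (Real.sin ((a-b)/2)), abs_nonneg (a-b)]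

lemma P2_dist (θ θ' : ℝ) : dist (P2 θ) (P2 θ') ≤ 16 * |θ - θ'| := by
  rw [EuclideanSpace.dist_eq, Fin.sum_univ_two]
  have e0 : dist (P2 θ 0) (P2 θ' 0) = |Real.cos (2*π*θ) - Real.cos (2*π*θ')| := by
    simp [P2, Real.dist_eq]
  have e1 : dist (P2 θ 1) (P2 θ' 1) = |Real.sin (2*π*θ) - Real.sin (2*π*θ')| := by
    simp [P2, Real.dist_eq]
  rw [e0, e1]
  calc Real.sqrt (|Real.cos (2*π*θ) - Real.cos (2*π*θ')|^2 + |Real.sin (2*π*θ) - Real.sin (2*π*θ')|^2)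
      ≤ ‖(|Real.cos (2*π*θ) - Real.cos (2*π*θ')|)‖ + ‖(|Real.sin (2*π*θ) - Real.sin (2*π*θ')|)‖ := by
        simpa using sqrt_sq_add_sq_le (|Real.cos (2*π*θ) - Real.cos (2*π*θ')|) (|Real.sin (2*π*θ) - Real.sin (2*π*θ')|)
    _ = |Real.cos (2*π*θ) - Real.cos (2*π*θ')| + |Real.sin (2*π*θ) - Real.sin (2*π*θ')| := by
        simp [Real.norm_eq_abs, abs_abs]
    _ ≤ |2*π*θ - 2*π*θ'| + |2*π*θ - 2*π*θ'| := add_le_add (cos_lip _ _) (sin_lip _ _)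
    _ = 2 * (2*π) * |θ - θ'| := by
        rw [show 2*π*θ - 2*π*θ' = (2*π)*(θ - θ') by ring, abs_mul,
          abs_of_nonneg (by positivity : (0:ℝ) ≤ 2*π)]
        ring
    _ ≤ 16 * |θ - θ'| := by
        have := Real.pi_le_four
        nlinarith [abs_nonneg (θ - θ')]

lemma P2_fiber {θ θ' : ℝ} (h : P2 θ = P2 θ') : ∃ k : ℤ, θ = θ' + k := by
  have hc : Real.cos (2*π*θ) = Real.cos (2*π*θ') := by
    have := congrFun (congrArg WithLp.ofLp h) 0; simpa [P2] using this
  have hs : Real.sin (2*π*θ) = Real.sin (2*π*θ') := by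
    have := congrFun (congrArg WithLp.ofLp h) 1; simpa [P2] using this
  have hexp : Complex.exp ((2*π*θ : ℝ) * Complex.I) = Complex.exp ((2*π*θ' : ℝ) * Complex.I) := by
    rw [Complex.exp_mul_I, Complex.exp_mul_I]
    rw [← Complex.ofReal_cos, ← Complex.ofReal_sin, ← Complex.ofReal_cos, ← Complex.ofReal_sin,
      hc, hs]
  rw [Complex.exp_eq_exp_iff_exists_int] at hexp
  obtain ⟨n, hn⟩ := hexp
  refine ⟨n, ?_⟩
  have h2 : (2*π*θ : ℝ) = 2*π*θ' + n * (2*π) := by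
    have him := congrArg Complex.im hn
    simpa using him
  have h2π : (2*π : ℝ) ≠ 0 := by positivity
  have h3 : 2*π*θ = 2*π*(θ' + n) := by rw [h2]; ring
  exact mul_left_cancel₀ h2π h3

lemma P2_surj_Icc (z : Metric.sphere (0 : EuclideanSpace ℝ (Fin 2)) 1) :
    ∃ θ ∈ Set.Icc (0:ℝ) 1, P2 θ = z.1 := by
  obtain ⟨x, hx⟩ := z
  rw [mem_sphere_zero_iff_norm, EuclideanSpace.norm_eq, Fin.sum_univ_two] at hx
  have hx2 : ‖x 0‖^2 + ‖x 1‖^2 = 1 := by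
    have h0 : (0:ℝ) ≤ ‖x 0‖^2 + ‖x 1‖^2 := by positivity
    nlinarith [Real.sq_sqrt h0, hx]
  set w : ℂ := Complex.mk (x 0) (x 1) with hw
  have habs : ‖w‖ = 1 := by
    rw [Complex.norm_def, Complex.normSq_mk]
    rw [show x 0 * x 0 + x 1 * x 1 = ‖x 0‖^2 + ‖x 1‖^2 by
      simp [Real.norm_eq_abs, sq_abs]; ring]
    rw [hx2, Real.sqrt_one]
  have hexp : Complex.exp (Complex.arg w * Complex.I) = w := by
    have := Complex.norm_mul_exp_arg_mul_I w
    rwa [habs, Complex.ofReal_one, one_mul] at this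
  have key : ∀ θ : ℝ, 2*π*θ = Complex.arg w → P2 θ = x := by
    intro θ hθ
    have : Complex.exp ((2*π*θ : ℝ) * Complex.I) = w := by rw [hθ]; exact hexp
    have hre := congrArg Complex.re this
    have him := congrArg Complex.im this
    rw [Complex.exp_ofReal_mul_I_re] at hre
    rw [Complex.exp_ofReal_mul_I_im] at him
    simp [hw] at hre him
    ext i
    fin_cases i
    · simpa [P2] using hre
    · simpa [P2] using him
  set θ₀ : ℝ := Complex.arg w / (2*π) with hθ₀
  have h2π : (0:ℝ) < 2*π := by positivity
  have hval : 2*π*θ₀ = Complex.arg w := by rw [hθ₀]; field_simp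
  have harg1 : -π < Complex.arg w := Complex.neg_pi_lt_arg w
  have harg2 : Complex.arg w ≤ π := Complex.arg_le_pi w
  rcases le_or_gt 0 θ₀ with h | h
  · refine ⟨θ₀, ⟨h, ?_⟩, key θ₀ hval⟩
    rw [hθ₀, div_le_one h2π]; linarith
  · refine ⟨θ₀ + 1, ⟨?_, ?_⟩, ?_⟩
    · have : -(1/2 : ℝ) < θ₀ := by
        rw [hθ₀, lt_div_iff₀ h2π] at *
        nlinarith [Real.pi_pos]
      linarith
    · linarith
    · rw [show (θ₀ + 1 : ℝ) = θ₀ + (1:ℤ) by push_cast; ring, P2_add_int]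
      exact key θ₀ hval


lemma P2_continuous : Continuous P2 := by
  have h : LipschitzWith (16 : NNReal) P2 := by
    apply LipschitzWith.of_dist_le_mul
    intro θ θ'
    have := P2_dist θ θ'
    rw [Real.dist_eq]
    calc dist (P2 θ) (P2 θ') ≤ 16 * |θ - θ'| := P2_dist θ θ'
      _ = ((16 : NNReal) : ℝ) * |θ - θ'| := by norm_num
  exact h.continuous


/-- clamp to [0,1] -/
noncomputable def clamp (s : ℝ) : ℝ := max 0 (min s 1)

lemma clamp_mem (s : ℝ) : clamp s ∈ Set.Icc (0:ℝ) 1 := by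
  constructor
  · exact le_max_left _ _
  · rcases le_total s 1 with h | h
    · simp [clamp, min_eq_left h, h]
    · simp [clamp, min_eq_right h]

lemma clamp_zero : clamp 0 = 0 := by norm_num [clamp]
lemma clamp_one : clamp 1 = 1 := by norm_num [clamp]
lemma clamp_lipw : LipschitzWith 1 clamp := by
  have h1 : LipschitzWith 1 (fun s : ℝ => min s 1) := LipschitzWith.min_const LipschitzWith.id 1
  show LipschitzWith 1 (fun s : ℝ => max 0 (min s 1))
  simpa [clamp, max_comm] using h1.max_const 0

lemma clamp_lip (s t : ℝ) : |clamp s - clamp t| ≤ |s - t| := by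
  have := clamp_lipw.dist_le_mul s t
  simpa [Real.dist_eq] using this

variable {Y : Type} [MetricSpace Y]

noncomputable def geo (hY : IsGeodesicSpace Y) (x y : Y) : ℝ → Y := (hY x y).choose

lemma geo_zero (hY : IsGeodesicSpace Y) (x y : Y) : geo hY x y 0 = x := (hY x y).choose_spec.1
lemma geo_last (hY : IsGeodesicSpace Y) (x y : Y) : geo hY x y (dist x y) = y :=
  (hY x y).choose_spec.2.1
lemma geo_iso (hY : IsGeodesicSpace Y) (x y : Y) :
    ∀ s ∈ Set.Icc (0 : ℝ) (dist x y), ∀ t ∈ Set.Icc (0 : ℝ) (dist x y),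
      dist (geo hY x y s) (geo hY x y t) = |s - t| := (hY x y).choose_spec.2.2

noncomputable def seg (hY : IsGeodesicSpace Y) (x y : Y) (s : ℝ) : Y :=
  geo hY x y (clamp s * dist x y)

lemma seg_zero (hY : IsGeodesicSpace Y) (x y : Y) : seg hY x y 0 = x := by
  rw [seg, clamp_zero, zero_mul, geo_zero]
lemma seg_one (hY : IsGeodesicSpace Y) (x y : Y) : seg hY x y 1 = y := by
  rw [seg, clamp_one, one_mul, geo_last]

lemma seg_mem (x y : Y) (s : ℝ) : clamp s * dist x y ∈ Set.Icc (0:ℝ) (dist x y) := by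
  obtain ⟨h0, h1⟩ := clamp_mem s
  constructor
  · exact mul_nonneg h0 dist_nonneg
  · calc clamp s * dist x y ≤ 1 * dist x y :=
        mul_le_mul_of_nonneg_right h1 dist_nonneg
      _ = dist x y := one_mul _

lemma seg_dist (hY : IsGeodesicSpace Y) (x y : Y) (s t : ℝ) :
    dist (seg hY x y s) (seg hY x y t) ≤ dist x y * |s - t| := by
  rw [seg, seg, geo_iso hY x y _ (seg_mem x y s) _ (seg_mem x y t)]
  rw [show clamp s * dist x y - clamp t * dist x y = dist x y * (clamp s - clamp t) by ring,
    abs_mul, abs_of_nonneg dist_nonneg]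
  exact mul_le_mul_of_nonneg_left (clamp_lip s t) dist_nonneg

/-- piecewise geodesic path through the points `a i`, parametrized so that
`pw` maps `[i/N, (i+1)/N]` to the segment from `a i` to `a (i+1)`. -/
noncomputable def pw (hY : IsGeodesicSpace Y) (a : ℤ → Y) (N : ℝ) (θ : ℝ) : Y :=
  seg hY (a ⌊N*θ⌋) (a (⌊N*θ⌋+1)) (N*θ - ⌊N*θ⌋)

lemma pw_lip_aux (hY : IsGeodesicSpace Y) (a : ℤ → Y) (N : ℝ) (hN : 0 < N) (K : ℝ)
    (hK : ∀ i, dist (a i) (a (i+1)) ≤ K) :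
    ∀ m : ℕ, ∀ θ θ' : ℝ, θ ≤ θ' → ⌊N*θ'⌋ = ⌊N*θ⌋ + m →
      dist (pw hY a N θ) (pw hY a N θ') ≤ N*K*(θ' - θ) := by
  have hseg : ∀ i : ℤ, ∀ s t : ℝ,
      dist (seg hY (a i) (a (i+1)) s) (seg hY (a i) (a (i+1)) t) ≤ K * |s - t| := by
    intro i s t
    calc dist (seg hY (a i) (a (i+1)) s) (seg hY (a i) (a (i+1)) t)
        ≤ dist (a i) (a (i+1)) * |s - t| := seg_dist hY _ _ s t
      _ ≤ K * |s - t| := mul_le_mul_of_nonneg_right (hK i) (abs_nonneg _)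
  intro m
  induction m with
  | zero =>
    intro θ θ' hle hfl
    simp only [Nat.cast_zero, add_zero] at hfl
    unfold pw
    rw [hfl]
    calc dist (seg hY (a ⌊N*θ⌋) (a (⌊N*θ⌋+1)) (N*θ - ⌊N*θ⌋))
          (seg hY (a ⌊N*θ⌋) (a (⌊N*θ⌋+1)) (N*θ' - ⌊N*θ⌋))
        ≤ K * |(N*θ - ⌊N*θ⌋) - (N*θ' - ⌊N*θ⌋)| := hseg _ _ _
      _ = N*K*(θ' - θ) := by
          rw [show (N*θ - ⌊N*θ⌋) - (N*θ' - ⌊N*θ⌋) = -(N*(θ' - θ)) by ring, abs_neg, abs_mul,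
            abs_of_pos hN, abs_of_nonneg (by linarith : (0:ℝ) ≤ θ' - θ)]
          ring
  | succ m ih =>
    intro θ θ' hle hfl
    set i : ℤ := ⌊N*θ⌋ with hi
    set θ'' : ℝ := (i + 1) / N with hθ''
    have hNθ'' : N * θ'' = (i + 1 : ℝ) := by
      rw [hθ'']; field_simp
    have hfl'' : ⌊N*θ''⌋ = i + 1 := by
      rw [hNθ'', show ((i:ℝ) + 1) = ((i + 1 : ℤ) : ℝ) by push_cast; ring, Int.floor_intCast]
    have hθθ'' : θ ≤ θ'' := by
      have h1 : N * θ < i + 1 := by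
        have := Int.lt_floor_add_one (N*θ); push_cast at this ⊢; linarith
      nlinarith [hNθ'']
    have hθ''θ' : θ'' ≤ θ' := by
      have h1 : (i + 1 : ℝ) ≤ N * θ' := by
        have h2 := Int.floor_le (N*θ')
        rw [hfl] at h2
        push_cast at h2 ⊢
        have hm : (0:ℝ) ≤ (m:ℝ) := Nat.cast_nonneg m
        linarith
      nlinarith [hNθ'']
    have hd1 : dist (pw hY a N θ) (pw hY a N θ'') ≤ N*K*(θ'' - θ) := by
      have hval : pw hY a N θ'' = seg hY (a i) (a (i+1)) 1 := by
        unfold pw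
        rw [hfl'']
        rw [show N*θ'' - ((i + 1 : ℤ) : ℝ) = 0 by rw [hNθ'']; push_cast; ring]
        rw [seg_zero, seg_one]
      rw [hval]
      unfold pw
      rw [← hi]
      calc dist (seg hY (a i) (a (i+1)) (N*θ - i)) (seg hY (a i) (a (i+1)) 1)
          ≤ K * |(N*θ - i) - 1| := hseg _ _ _
        _ = N*K*(θ'' - θ) := by
            rw [show (N*θ - i) - 1 = -(N*θ'' - N*θ) by rw [hNθ'']; ring, abs_neg,
              show N*θ'' - N*θ = N*(θ'' - θ) by ring, abs_mul, abs_of_pos hN,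
              abs_of_nonneg (by linarith : (0:ℝ) ≤ θ'' - θ)]
            ring
    have hd2 : dist (pw hY a N θ'') (pw hY a N θ') ≤ N*K*(θ' - θ'') := by
      apply ih θ'' θ' hθ''θ'
      rw [hfl'', hfl]
      push_cast
      ring
    calc dist (pw hY a N θ) (pw hY a N θ')
        ≤ dist (pw hY a N θ) (pw hY a N θ'') + dist (pw hY a N θ'') (pw hY a N θ') :=
          dist_triangle _ _ _
      _ ≤ N*K*(θ'' - θ) + N*K*(θ' - θ'') := add_le_add hd1 hd2
      _ = N*K*(θ' - θ) := by ring

lemma pw_lip (hY : IsGeodesicSpace Y) (a : ℤ → Y) (N : ℝ) (hN : 0 < N) (K : ℝ)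
    (hK : ∀ i, dist (a i) (a (i+1)) ≤ K) (θ θ' : ℝ) :
    dist (pw hY a N θ) (pw hY a N θ') ≤ N*K*|θ - θ'| := by
  have key : ∀ s t : ℝ, s ≤ t → dist (pw hY a N s) (pw hY a N t) ≤ N*K*(t - s) := by
    intro s t hst
    have hm : ⌊N*s⌋ ≤ ⌊N*t⌋ := Int.floor_le_floor (by nlinarith)
    have : ⌊N*t⌋ = ⌊N*s⌋ + ((⌊N*t⌋ - ⌊N*s⌋).toNat : ℤ) := by
      rw [Int.toNat_of_nonneg (by omega)]; ring
    exact pw_lip_aux hY a N hN K hK (⌊N*t⌋ - ⌊N*s⌋).toNat s t hst this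
  rcases le_total θ θ' with h | h
  · rw [abs_of_nonpos (by linarith : θ - θ' ≤ 0)]
    have := key θ θ' h
    linarith [this]
  · rw [abs_of_nonneg (by linarith : (0:ℝ) ≤ θ - θ'), dist_comm]
    have := key θ' θ h
    linarith [this]

lemma pw_continuous (hY : IsGeodesicSpace Y) (a : ℤ → Y) (N : ℝ) (hN : 0 < N) (K : ℝ)
    (hK : ∀ i, dist (a i) (a (i+1)) ≤ K) : Continuous (pw hY a N) := by
  have : LipschitzWith (N*K).toNNReal (pw hY a N) := by
    apply LipschitzWith.of_dist_le_mul
    intro θ θ'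
    calc dist (pw hY a N θ) (pw hY a N θ') ≤ N*K*|θ - θ'| := pw_lip hY a N hN K hK θ θ'
      _ ≤ ((N*K).toNNReal : ℝ) * dist θ θ' := by
          rw [Real.dist_eq, Real.coe_toNNReal']
          exact mul_le_mul_of_nonneg_right (le_max_left _ _) (abs_nonneg _)
  exact this.continuous

lemma pw_close (hY : IsGeodesicSpace Y) (a : ℤ → Y) (N : ℝ) (K : ℝ)
    (hK : ∀ i, dist (a i) (a (i+1)) ≤ K) (hKpos : 0 ≤ K) (θ : ℝ) :
    dist (pw hY a N θ) (a ⌊N*θ⌋) ≤ K := by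
  calc dist (pw hY a N θ) (a ⌊N*θ⌋)
      = dist (seg hY (a ⌊N*θ⌋) (a (⌊N*θ⌋+1)) (N*θ - ⌊N*θ⌋))
        (seg hY (a ⌊N*θ⌋) (a (⌊N*θ⌋+1)) 0) := by rw [pw, seg_zero]
    _
      ≤ dist (a ⌊N*θ⌋) (a (⌊N*θ⌋+1)) * |(N*θ - ⌊N*θ⌋) - 0| := seg_dist hY _ _ _ _
    _ ≤ K * 1 := by
        apply mul_le_mul (hK _) _ (abs_nonneg _) hKpos
        rw [sub_zero, abs_of_nonneg (by linarith [Int.floor_le (N*θ)])]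
        linarith [Int.lt_floor_add_one (N*θ)]
    _ = K := mul_one _

lemma pw_add_int (hY : IsGeodesicSpace Y) (a : ℤ → Y) (n : ℕ) (hn : 0 < n) (k : ℤ)
    (ha : ∀ j : ℤ, a (j + n*k) = a j) (θ : ℝ) :
    pw hY a n (θ + k) = pw hY a n θ := by
  have hNcast : (n:ℝ) * (θ + k) = (n:ℝ)*θ + ((n*k : ℤ) : ℝ) := by push_cast; ring
  have hfl : ⌊(n:ℝ)*(θ + k)⌋ = ⌊(n:ℝ)*θ⌋ + n*k := by
    rw [hNcast, Int.floor_add_intCast]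
  unfold pw
  rw [hfl]
  have e1 : a (⌊(n:ℝ)*θ⌋ + n*k) = a ⌊(n:ℝ)*θ⌋ := ha _
  have e2 : a (⌊(n:ℝ)*θ⌋ + n*k + 1) = a (⌊(n:ℝ)*θ⌋ + 1) := by
    rw [show ⌊(n:ℝ)*θ⌋ + (n:ℤ)*k + 1 = (⌊(n:ℝ)*θ⌋ + 1) + n*k by ring]
    exact ha _
  rw [e1, e2]
  congr 1
  rw [hNcast]
  push_cast
  ring

end LoopApprox


open LoopApprox in
/-- Loop approximation: if `f : E² → Y` is coarsely Lipschitz into a geodesic space `Y`,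
then there is `δ = δ(λ,C)` such that for every continuous loop `c₁` in `E²` the
quasi-loop `f ∘ c₁` is shadowed at distance `≤ δ` by a continuous loop `c₂` in `Y`. -/
theorem loop_approximation :
    ∀ lam C : ℝ, 0 ≤ lam → 0 ≤ C →
      ∃ δ : ℝ, ∀ (Y : Type) [MetricSpace Y], IsGeodesicSpace Y →
        ∀ f : EuclideanSpace ℝ (Fin 2) → Y,
          (∀ x x' : EuclideanSpace ℝ (Fin 2), dist (f x) (f x') ≤ lam * dist x x' + C) →
          ∀ c₁ : Metric.sphere (0 : EuclideanSpace ℝ (Fin 2)) 1 → EuclideanSpace ℝ (Fin 2),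
            Continuous c₁ →
            ∃ c₂ : Metric.sphere (0 : EuclideanSpace ℝ (Fin 2)) 1 → Y,
              Continuous c₂ ∧ ∀ t, dist (f (c₁ t)) (c₂ t) ≤ δ := by
  intro lam C hlam hC
  refine ⟨2*(lam + C), ?_⟩
  intro Y _ hY f hf c₁ hc₁
  have huc : UniformContinuous c₁ := CompactSpace.uniformContinuous_of_continuous hc₁
  rw [Metric.uniformContinuous_iff] at huc
  obtain ⟨ε, hεpos, hεc⟩ := huc 1 one_pos
  obtain ⟨n, hn⟩ := exists_nat_gt (max (16/ε) 1)
  have hn1 : (1:ℝ) ≤ n := le_of_lt (lt_of_le_of_lt (le_max_right _ _) hn)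
  have hNpos : (0:ℝ) < n := by linarith
  have hnn : 0 < n := by exact_mod_cast lt_of_lt_of_le zero_lt_one hn1
  have hne : (16:ℝ)/n < ε := by
    have h16 : 16/ε < n := lt_of_le_of_lt (le_max_left _ _) hn
    rw [div_lt_iff₀ hεpos] at h16
    rw [div_lt_iff₀ hNpos]
    linarith
  set p : ℝ → Metric.sphere (0 : EuclideanSpace ℝ (Fin 2)) 1 :=
    fun θ => ⟨P2 θ, P2_mem θ⟩ with hp
  have hclose : ∀ θ θ' : ℝ, |θ - θ'| ≤ 1/n → dist (c₁ (p θ)) (c₁ (p θ')) ≤ 1 := by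
    intro θ θ' h
    apply le_of_lt
    apply hεc
    rw [Subtype.dist_eq]
    calc dist (P2 θ) (P2 θ') ≤ 16 * |θ - θ'| := P2_dist θ θ'
      _ ≤ 16 * (1/(n:ℝ)) := mul_le_mul_of_nonneg_left h (by norm_num)
      _ < ε := by rw [mul_one_div]; exact hne
  set a : ℤ → Y := fun i => f (c₁ (p ((i:ℝ) / n))) with ha
  have haK : ∀ i, dist (a i) (a (i+1)) ≤ lam + C := by
    intro i
    have hdist : |(i:ℝ)/n - ((i+1:ℤ):ℝ)/n| ≤ 1/(n:ℝ) := by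
      push_cast
      rw [show (i:ℝ)/n - ((i:ℝ)+1)/n = -(1/(n:ℝ)) by field_simp; ring, abs_neg,
        abs_of_nonneg (by positivity)]
    calc dist (a i) (a (i+1))
        ≤ lam * dist (c₁ (p ((i:ℝ)/n))) (c₁ (p (((i+1:ℤ):ℝ)/n))) + C := hf _ _
      _ ≤ lam * 1 + C := by
          have := hclose ((i:ℝ)/n) (((i+1:ℤ):ℝ)/n) hdist
          nlinarith
      _ = lam + C := by ring
  have hK0 : 0 ≤ lam + C := by linarith
  have haper : ∀ k : ℤ, ∀ j : ℤ, a (j + n*k) = a j := by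
    intro k j
    have hcast : ((j + (n:ℤ)*k : ℤ) : ℝ)/n = (j:ℝ)/n + k := by
      push_cast
      field_simp
    simp only [ha]
    rw [hcast]
    have hpp : p ((j:ℝ)/n + (k:ℝ)) = p ((j:ℝ)/n) := Subtype.ext (P2_add_int ((j:ℝ)/n) k)
    rw [hpp]
  have hgper : ∀ (θ : ℝ) (k : ℤ), pw hY a n (θ + k) = pw hY a n θ := fun θ k =>
    pw_add_int hY a n hnn k (haper k) θ
  have hsurj : ∀ z : Metric.sphere (0:EuclideanSpace ℝ (Fin 2)) 1,
      ∃ θ ∈ Set.Icc (0:ℝ) 1, p θ = z := by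
    intro z
    obtain ⟨θ, hθ, hz⟩ := P2_surj_Icc z
    exact ⟨θ, hθ, Subtype.ext hz⟩
  choose τ hτmem hτ using hsurj
  have hfac : ∀ θ : ℝ, pw hY a n (τ (p θ)) = pw hY a n θ := by
    intro θ
    have h1 : p (τ (p θ)) = p θ := hτ (p θ)
    have h2 : P2 (τ (p θ)) = P2 θ := congrArg Subtype.val h1
    obtain ⟨k, hk⟩ := P2_fiber h2
    rw [hk, hgper]
  refine ⟨fun z => pw hY a n (τ z), ?_, ?_⟩
  · -- continuity via the quotient map from [0,1]
    have hcont_pw : Continuous (pw hY a (n:ℝ)) := pw_continuous hY a n hNpos _ haK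
    set q : Set.Icc (0:ℝ) 1 → Metric.sphere (0:EuclideanSpace ℝ (Fin 2)) 1 :=
      fun θ => p θ.1 with hq
    have hqc : Continuous q := by
      apply Continuous.subtype_mk
      exact P2_continuous.comp continuous_subtype_val
    have hqs : Function.Surjective q := by
      intro z
      exact ⟨⟨τ z, hτmem z⟩, hτ z⟩
    haveI : CompactSpace (Set.Icc (0:ℝ) 1) := isCompact_iff_compactSpace.mp isCompact_Icc
    have hqm : IsQuotientMap q := IsQuotientMap.of_surjective_continuous hqs hqc
    rw [hqm.continuous_iff]
    have hcomp : (fun z => pw hY a n (τ z)) ∘ q = fun θ : Set.Icc (0:ℝ) 1 => pw hY a n θ.1 := by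
      funext θ
      exact hfac θ.1
    rw [hcomp]
    exact hcont_pw.comp continuous_subtype_val
  · -- closeness
    intro t
    set θ : ℝ := τ t with hθ
    set i : ℤ := ⌊(n:ℝ)*θ⌋ with hi
    have h1 : p θ = t := hτ t
    have hfrac0 : (i:ℝ) ≤ (n:ℝ)*θ := Int.floor_le _
    have hfrac1 : (n:ℝ)*θ < i + 1 := Int.lt_floor_add_one _
    have hd2 : dist (a i) (f (c₁ t)) ≤ lam + C := by
      rw [← h1]
      have hdist : |(i:ℝ)/n - θ| ≤ 1/(n:ℝ) := by
        rw [show (i:ℝ)/n - θ = ((i:ℝ) - n*θ)/n by field_simp, abs_div,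
          abs_of_pos hNpos]
        gcongr
        rw [abs_le]
        constructor <;> linarith
      calc dist (a i) (f (c₁ (p θ)))
          ≤ lam * dist (c₁ (p ((i:ℝ)/n))) (c₁ (p θ)) + C := hf _ _
        _ ≤ lam * 1 + C := by
            have := hclose ((i:ℝ)/n) θ hdist
            nlinarith
        _ = lam + C := by ring
    calc dist (f (c₁ t)) (pw hY a n θ)
        ≤ dist (f (c₁ t)) (a i) + dist (a i) (pw hY a n θ) := dist_triangle _ _ _
      _ ≤ (lam + C) + (lam + C) := by
          apply add_le_add
          · rw [dist_comm]; exact hd2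
          · rw [dist_comm]
            exact pw_close hY a n _ haK hK0 θ
      _ = 2*(lam + C) := by ring
end

section
/- Let Γ be an infinite group with a finite generating set S, equipped with the word metric d_S. Then for every g ∈ Γ there exists a map α : ℤ → Γ with α(0) = g and d_S(α(m), α(n)) = |m − n| for all m, n ∈ ℤ (a bi-infinite geodesic through g). -/
/-!
A shortest word for an element far from `1` spells out, through its prefixes, a long geodesic
segment. In an infinite group with finite balls there are such words of every length, so after
recentring at `g` there are geodesic segments `[-n, n] → Γ` through `g` for all `n`. Their values
at each time `t` lie in the finite ball of radius `|t|` about `g`, so a limit along an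
ultrafilter on `ℕ` (Kőnig's lemma in disguise) is a bi-infinite geodesic through `g`.
-/

/-- The word metric on a group `Γ` relative to a generating set `S`:
`wordDist S g h` is the least `n` such that `g⁻¹ * h` is a product of `n`
elements of `S ∪ S⁻¹`. -/
noncomputable def wordDist {Γ : Type*} [Group Γ] (S : Set Γ) (g h : Γ) : ℕ :=
  sInf {n : ℕ | ∃ l : List Γ, l.length = n ∧ (∀ a ∈ l, a ∈ S ∨ a⁻¹ ∈ S) ∧
    l.prod = g⁻¹ * h}

open Set

section WordMetric

variable {Γ : Type*} [Group Γ] {S : Set Γ}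

theorem exists_word_prod_eq (hgen : Subgroup.closure S = ⊤) (x : Γ) :
    ∃ l : List Γ, (∀ a ∈ l, a ∈ S ∪ S⁻¹) ∧ l.prod = x := by
  apply Submonoid.exists_list_of_mem_closure
  rw [← Subgroup.closure_toSubmonoid, hgen]
  trivial

theorem exists_word_length_eq_wordDist (hgen : Subgroup.closure S = ⊤) (g h : Γ) :
    ∃ l : List Γ, (∀ a ∈ l, a ∈ S ∪ S⁻¹) ∧ l.length = wordDist S g h ∧ l.prod = g⁻¹ * h := by
  obtain ⟨l, hl, hprod⟩ := exists_word_prod_eq hgen (g⁻¹ * h)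
  obtain ⟨l', hlen, hl', hprod'⟩ : wordDist S g h ∈ _ := Nat.sInf_mem ⟨l.length, l, rfl, hl, hprod⟩
  exact ⟨l', hl', hlen, hprod'⟩

theorem wordDist_le_length {g h : Γ} {l : List Γ} (hl : ∀ a ∈ l, a ∈ S ∪ S⁻¹)
    (hprod : l.prod = g⁻¹ * h) : wordDist S g h ≤ l.length :=
  Nat.sInf_le ⟨l, rfl, hl, hprod⟩

theorem wordDist_mul_left (a g h : Γ) : wordDist S (a * g) (a * h) = wordDist S g h := by
  simp only [wordDist, mul_inv_rev, mul_assoc, inv_mul_cancel_left]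

theorem wordDist_comm (g h : Γ) : wordDist S g h = wordDist S h g := by
  suffices ∀ g h : Γ, {n | ∃ l : List Γ, l.length = n ∧ (∀ a ∈ l, a ∈ S ∪ S⁻¹) ∧
      l.prod = g⁻¹ * h} ⊆ {n | ∃ l : List Γ, l.length = n ∧ (∀ a ∈ l, a ∈ S ∪ S⁻¹) ∧
      l.prod = h⁻¹ * g} from congrArg sInf ((this g h).antisymm (this h g))
  rintro g h _ ⟨l, rfl, hl, hprod⟩
  refine ⟨(l.map (·⁻¹)).reverse, by simp, ?_, by rw [← List.prod_inv_reverse, hprod]; group⟩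
  simp only [List.mem_reverse, List.mem_map]
  rintro _ ⟨b, hb, rfl⟩
  simpa [or_comm] using hl b hb

theorem wordDist_triangle (hgen : Subgroup.closure S = ⊤) (g h k : Γ) :
    wordDist S g k ≤ wordDist S g h + wordDist S h k := by
  obtain ⟨l₁, hl₁, hlen₁, hprod₁⟩ := exists_word_length_eq_wordDist hgen g h
  obtain ⟨l₂, hl₂, hlen₂, hprod₂⟩ := exists_word_length_eq_wordDist hgen h k
  calc wordDist S g k ≤ (l₁ ++ l₂).length :=
        wordDist_le_length (fun a ha => (List.mem_append.mp ha).elim (hl₁ a) (hl₂ a))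
          (by rw [List.prod_append, hprod₁, hprod₂]; group)
    _ = wordDist S g h + wordDist S h k := by rw [List.length_append, hlen₁, hlen₂]

theorem finite_setOf_wordDist_le (hfin : S.Finite) (hgen : Subgroup.closure S = ⊤) (g : Γ)
    (n : ℕ) : {h | wordDist S g h ≤ n}.Finite := by
  have : Finite ↥(S ∪ S⁻¹) := (hfin.union hfin.inv).to_subtype
  refine (((List.finite_length_le ↥(S ∪ S⁻¹) n).image
    fun l => g * (l.map Subtype.val).prod)).subset ?_
  intro h hh
  obtain ⟨l, hl, hlen, hprod⟩ := exists_word_length_eq_wordDist hgen g h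
  lift l to List ↥(S ∪ S⁻¹) using hl
  rw [List.length_map] at hlen
  exact ⟨l, hlen.trans_le hh, by simp only [hprod, mul_inv_cancel_left]⟩

end WordMetric

section Geodesic

variable {Γ : Type*} [Group Γ] {S : Set Γ}

def IsGeodesicOn (S : Set Γ) (I : Set ℤ) (α : ℤ → Γ) : Prop :=
  ∀ m ∈ I, ∀ n ∈ I, wordDist S (α m) (α n) = (m - n).natAbs

theorem wordDist_prod_take_le {l : List Γ} (hl : ∀ a ∈ l, a ∈ S ∪ S⁻¹) {i j : ℕ}
    (hij : i ≤ j) : wordDist S (l.take i).prod (l.take j).prod ≤ j - i := by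
  have htake : l.take j = l.take i ++ (l.drop i).take (j - i) := by
    rw [← List.take_add, Nat.add_sub_cancel' hij]
  calc wordDist S (l.take i).prod (l.take j).prod ≤ ((l.drop i).take (j - i)).length :=
        wordDist_le_length (fun a ha => hl a (List.drop_subset i l (List.take_subset _ _ ha)))
          (by rw [htake, List.prod_append, inv_mul_cancel_left])
    _ ≤ j - i := List.length_take_le _ _

/-- Were two prefixes closer than their lengths differ, the triangle inequality through them
would give a word for `l.prod` shorter than the shortest one. -/
theorem wordDist_prod_take_of_wordDist_eq_length (hgen : Subgroup.closure S = ⊤) {l : List Γ}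
    (hl : ∀ a ∈ l, a ∈ S ∪ S⁻¹) (hshort : wordDist S 1 l.prod = l.length) {i j : ℕ}
    (hi : i ≤ l.length) (hj : j ≤ l.length) :
    wordDist S (l.take i).prod (l.take j).prod = ((i : ℤ) - j).natAbs := by
  wlog hij : i ≤ j generalizing i j
  · rw [wordDist_comm, this hj hi (by omega)]
    omega
  have h₁ := wordDist_prod_take_le hl (Nat.zero_le i)
  have h₂ := wordDist_prod_take_le hl hj
  have h₃ := wordDist_prod_take_le hl hij
  have h₄ := wordDist_triangle hgen (l.take 0).prod (l.take i).prod (l.take j).prod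
  have h₅ := wordDist_triangle hgen (l.take 0).prod (l.take j).prod (l.take l.length).prod
  rw [List.take_zero, List.prod_nil, List.take_length, hshort] at *
  omega

theorem exists_isGeodesicOn_Icc [Infinite Γ] (hfin : S.Finite) (hgen : Subgroup.closure S = ⊤)
    (g : Γ) (n : ℕ) : ∃ α : ℤ → Γ, α 0 = g ∧ IsGeodesicOn S (Icc (-n) n) α := by
  obtain ⟨w, hw⟩ := (finite_setOf_wordDist_le hfin hgen 1 (2 * n)).exists_notMem
  obtain ⟨l, hl, hlen, hprod⟩ := exists_word_length_eq_wordDist hgen 1 w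
  rw [inv_one, one_mul] at hprod
  subst hprod
  set p : ℕ → Γ := fun i => (l.take i).prod
  refine ⟨fun t => g * (p n)⁻¹ * p (t + n).toNat, by simp, ?_⟩
  rintro m ⟨hm₁, hm₂⟩ k ⟨hk₁, hk₂⟩
  simp only [mem_ofPred_eq, not_le] at hw
  rw [wordDist_mul_left, wordDist_prod_take_of_wordDist_eq_length hgen hl hlen.symm
    (by omega) (by omega)]
  omega

end Geodesic

theorem Ultrafilter.exists_forall_eventually_eq {ι α β : Type*} (U : Ultrafilter ι)
    {F : ι → α → β} {B : α → Set β} (hB : ∀ a, (B a).Finite)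
    (hF : ∀ a, ∀ᶠ i in U, F i a ∈ B a) : ∃ f : α → β, ∀ a, ∀ᶠ i in U, F i a = f a := by
  choose f _ hf using fun a => (U.eventually_exists_mem_iff (hB a) (P := fun b i => F i a = b)).mp
    ((hF a).mono fun i hi => ⟨F i a, hi, rfl⟩)
  exact ⟨f, hf⟩

/-- In an infinite finitely generated group, every element lies on a bi-infinite
geodesic for the word metric. -/
theorem exists_biinfinite_geodesic
    {Γ : Type*} [Group Γ] [Infinite Γ]
    (S : Set Γ) (hfin : S.Finite) (hgen : Subgroup.closure S = ⊤)
    (g : Γ) :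
    ∃ α : ℤ → Γ, α 0 = g ∧ ∀ m n : ℤ, wordDist S (α m) (α n) = (m - n).natAbs := by
  choose F hF₀ hF using exists_isGeodesicOn_Icc hfin hgen g
  let U := Filter.hyperfilter ℕ
  have hlarge (t : ℤ) : ∀ᶠ k : ℕ in U, t ∈ Icc (-(k : ℤ)) k :=
    (Filter.eventually_ge_atTop t.natAbs).filter_mono Nat.hyperfilter_le_atTop |>.mono
      fun k hk => ⟨by omega, by omega⟩
  obtain ⟨α, hα⟩ := U.exists_forall_eventually_eq
    (B := fun t => {x | wordDist S g x ≤ t.natAbs})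
    (fun t => finite_setOf_wordDist_le hfin hgen g _) fun t => (hlarge t).mono fun k hk => by
      simpa [hF₀] using (hF k 0 ⟨by omega, by omega⟩ t hk).le
  refine ⟨α, ?_, fun m n => ?_⟩
  · obtain ⟨k, hk⟩ := (hα 0).exists
    rw [← hk, hF₀]
  · obtain ⟨k, hkm, hkn, hm, hn⟩ := ((hα m).and ((hα n).and ((hlarge m).and (hlarge n)))).exists
    rw [← hkm, ← hkn]
    exact hF k m hm n hn
end
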